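/- Define $f : \mathbb{Z}^2 \to \mathbb{R}$ by $f(x,y) = \log(x^2 + y^2 - 1/2)$ for $(x,y) \ne (0,0)$ and $f(0,0) = -5$. Then for every $(x,y) \in \mathbb{Z}^2 \setminus \{(0,0)\}$, $\frac{1}{4}\big(f(x+1,y) + f(x-1,y) + f(x,y+1) + f(x,y-1)\big) \le f(x,y)$. More precisely, writing $\Delta_{x,y} = \frac{1}{4}(f(x+1,y)+f(x-1,y)+f(x,y+1)+f(x,y-1)) - f(x,y)$: if $|x|+|y| \ge 2$ then $\exp(4\Delta_{x,y}) = 1 - \frac{64(x^2-y^2)^2}{(2x^2+2y^2-1)^4} \le 1$, and if $|x|+|y| = 1$ then $\exp(4\Delta_{x,y}) = 126\,e^{-5} < 0.85$. -/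

import Mathlib

/-- The function `f : ℤ² → ℝ` given by `f(x,y) = log(x² + y² - 1/2)` for `(x,y) ≠ (0,0)`
and `f(0,0) = -5`. -/
noncomputable def srwLyapunov (x y : ℤ) : ℝ :=
  if x = 0 ∧ y = 0 then -5 else Real.log ((x : ℝ) ^ 2 + (y : ℝ) ^ 2 - 1/2)

/-- The discrete Laplacian-type increment
`Δ_{x,y} = ¼(f(x+1,y) + f(x-1,y) + f(x,y+1) + f(x,y-1)) - f(x,y)`. -/
noncomputable def srwLyapunovDelta (x y : ℤ) : ℝ :=
  (srwLyapunov (x + 1) y + srwLyapunov (x - 1) y +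
     srwLyapunov x (y + 1) + srwLyapunov x (y - 1)) / 4 - srwLyapunov x y

/-!
Off the origin `f = log q` with `q(x,y) = x² + y² - 1/2`, and `f(0,0) = log e⁻⁵`, so `exp (4Δ)` is
the product of `exp f` over the four neighbours divided by `(exp f(x,y))⁴`. When no neighbour is
the origin, the neighbour product equals `q⁴ - 4(x² - y²)²`, which gives the closed form. At a
neighbour of the origin the ratio is `(7/2)(3/2)² e⁻⁵ / (1/2)⁴ = 126 e⁻⁵`, and `e⁵ > 148.4`.
-/

open Real

lemma Int.one_le_sq_add_sq {x y : ℤ} (h : ¬(x = 0 ∧ y = 0)) : 1 ≤ x ^ 2 + y ^ 2 := by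
  rcases not_and_or.mp h with h | h
  · nlinarith [Int.one_le_abs h, sq_abs x, sq_nonneg y]
  · nlinarith [Int.one_le_abs h, sq_abs y, sq_nonneg x]

lemma sq_add_sq_sub_half_pos {x y : ℤ} (h : ¬(x = 0 ∧ y = 0)) :
    0 < (x : ℝ) ^ 2 + (y : ℝ) ^ 2 - 1 / 2 := by
  have : (1 : ℝ) ≤ (x : ℝ) ^ 2 + (y : ℝ) ^ 2 := by exact_mod_cast Int.one_le_sq_add_sq h
  linarith

lemma exp_srwLyapunov_of_ne {x y : ℤ} (h : ¬(x = 0 ∧ y = 0)) :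
    exp (srwLyapunov x y) = (x : ℝ) ^ 2 + (y : ℝ) ^ 2 - 1 / 2 := by
  rw [srwLyapunov, if_neg h, exp_log (sq_add_sq_sub_half_pos h)]

lemma exp_four_mul_srwLyapunovDelta (x y : ℤ) :
    exp (4 * srwLyapunovDelta x y) =
      exp (srwLyapunov (x + 1) y) * exp (srwLyapunov (x - 1) y) *
        exp (srwLyapunov x (y + 1)) * exp (srwLyapunov x (y - 1)) /
        exp (srwLyapunov x y) ^ 4 := by
  rw [srwLyapunovDelta, ← exp_nat_mul, ← exp_add, ← exp_add, ← exp_add, ← exp_sub]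
  congr 1
  push_cast
  ring

lemma neighbour_product_eq_pow_four_sub (x y : ℝ) :
    ((x + 1) ^ 2 + y ^ 2 - 1 / 2) * ((x - 1) ^ 2 + y ^ 2 - 1 / 2) *
        (x ^ 2 + (y + 1) ^ 2 - 1 / 2) * (x ^ 2 + (y - 1) ^ 2 - 1 / 2) =
      (x ^ 2 + y ^ 2 - 1 / 2) ^ 4 - 4 * (x ^ 2 - y ^ 2) ^ 2 := by
  ring

lemma exp_four_mul_srwLyapunovDelta_of_two_le {x y : ℤ} (h : 2 ≤ |x| + |y|) :
    exp (4 * srwLyapunovDelta x y) =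
      1 - 64 * ((x : ℝ) ^ 2 - (y : ℝ) ^ 2) ^ 2 / (2 * (x : ℝ) ^ 2 + 2 * (y : ℝ) ^ 2 - 1) ^ 4 := by
  rw [Int.abs_eq_natAbs, Int.abs_eq_natAbs] at h
  have hxy : ¬(x = 0 ∧ y = 0) := by omega
  rw [exp_four_mul_srwLyapunovDelta, exp_srwLyapunov_of_ne (by omega),
    exp_srwLyapunov_of_ne (by omega), exp_srwLyapunov_of_ne (by omega),
    exp_srwLyapunov_of_ne (by omega), exp_srwLyapunov_of_ne hxy]
  have hq := (sq_add_sq_sub_half_pos hxy).ne'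
  push_cast
  rw [neighbour_product_eq_pow_four_sub,
    show 2 * (x : ℝ) ^ 2 + 2 * (y : ℝ) ^ 2 - 1 = 2 * ((x : ℝ) ^ 2 + (y : ℝ) ^ 2 - 1 / 2) by ring]
  generalize (x : ℝ) ^ 2 + (y : ℝ) ^ 2 - 1 / 2 = q at hq ⊢
  field_simp
  ring

lemma exp_four_mul_srwLyapunovDelta_of_abs_add_abs_eq_one {x y : ℤ} (h : |x| + |y| = 1) :
    exp (4 * srwLyapunovDelta x y) = 126 * exp (-5) := by
  rw [Int.abs_eq_natAbs, Int.abs_eq_natAbs] at h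
  obtain ⟨rfl, rfl⟩ | ⟨rfl, rfl⟩ | ⟨rfl, rfl⟩ | ⟨rfl, rfl⟩ :
      (x = 1 ∧ y = 0) ∨ (x = -1 ∧ y = 0) ∨ (x = 0 ∧ y = 1) ∨ (x = 0 ∧ y = -1) := by omega
  all_goals
    rw [exp_four_mul_srwLyapunovDelta]
    norm_num [srwLyapunov, exp_log]
    ring

lemma one_hundred_twenty_six_mul_exp_neg_five_lt : (126 : ℝ) * exp (-5) < 0.85 := by
  have h5 : (148.4 : ℝ) < exp 5 :=
    calc (148.4 : ℝ) < 2.7182818283 ^ 5 := by norm_num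
      _ < exp 1 ^ 5 := by gcongr; exact exp_one_gt_d9
      _ = exp 5 := by rw [← exp_nat_mul]; norm_num
  rw [exp_neg, ← div_eq_mul_inv, div_lt_iff₀ (exp_pos 5)]
  linarith

/-- **Supermartingale computation.** For every `(x,y) ∈ ℤ² \ {(0,0)}` the average of `f`
over the four neighbours of `(x,y)` is at most `f(x,y)`; more precisely, if `|x|+|y| ≥ 2`
then `exp(4Δ_{x,y}) = 1 - 64(x² - y²)²/(2x² + 2y² - 1)⁴ ≤ 1`, and if `|x|+|y| = 1` then
`exp(4Δ_{x,y}) = 126 e⁻⁵ < 0.85`. -/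
theorem srwLyapunov_superharmonic (x y : ℤ) (hxy : ¬(x = 0 ∧ y = 0)) :
    ((srwLyapunov (x + 1) y + srwLyapunov (x - 1) y +
        srwLyapunov x (y + 1) + srwLyapunov x (y - 1)) / 4 ≤ srwLyapunov x y) ∧
    (2 ≤ |x| + |y| →
      Real.exp (4 * srwLyapunovDelta x y)
          = 1 - 64 * ((x : ℝ) ^ 2 - (y : ℝ) ^ 2) ^ 2 /
              (2 * (x : ℝ) ^ 2 + 2 * (y : ℝ) ^ 2 - 1) ^ 4 ∧
      Real.exp (4 * srwLyapunovDelta x y) ≤ 1) ∧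
    (|x| + |y| = 1 →
      Real.exp (4 * srwLyapunovDelta x y) = 126 * Real.exp (-5) ∧
      (126 : ℝ) * Real.exp (-5) < 0.85) := by
  have avg_le : exp (4 * srwLyapunovDelta x y) ≤ 1 →
      (srwLyapunov (x + 1) y + srwLyapunov (x - 1) y +
        srwLyapunov x (y + 1) + srwLyapunov x (y - 1)) / 4 ≤ srwLyapunov x y := by
    intro h
    have := exp_le_one_iff.mp h
    rw [srwLyapunovDelta] at this
    linarith
  rcases le_or_gt 2 (|x| + |y|) with hfar | hnear
  · have hexp := exp_four_mul_srwLyapunovDelta_of_two_le hfar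
    have hle : exp (4 * srwLyapunovDelta x y) ≤ 1 := hexp ▸ sub_le_self _ (by positivity)
    exact ⟨avg_le hle, fun _ => ⟨hexp, hle⟩, fun h => by linarith⟩
  · have hone : |x| + |y| = 1 := by
      rw [Int.abs_eq_natAbs, Int.abs_eq_natAbs] at hnear ⊢
      omega
    have hexp := exp_four_mul_srwLyapunovDelta_of_abs_add_abs_eq_one hone
    have hle : exp (4 * srwLyapunovDelta x y) ≤ 1 :=
      hexp ▸ one_hundred_twenty_six_mul_exp_neg_five_lt.le.trans (by norm_num)
    exact ⟨avg_le hle, fun h => by linarith,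
      fun _ => ⟨hexp, one_hundred_twenty_six_mul_exp_neg_five_lt⟩⟩
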